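/- arXiv:math/0607645 — 2 statements merged into one kernel-verified Lean document; each statement's English description precedes it below -/
import Mathlib

section
/- Let μ = 0.75, δ = 0.1, ε = 0.01, d ≥ 11. Define, for r ∈ [μ−δ, μ+δ], r̄ = √((r+μ+δ)² − (1+2ε)²) and r_ = √((r+μ−δ)² − (1−2ε)²), and g(r) = r̄^{d−2}/3 − r_^{d−2}. Then g is increasing on the interval [μ−δ, μ+δ]. -/
/-- Key inequality: the derivative factor comparison. -/
lemma key_ineq (m : ℕ) (hm : 7 ≤ m) (x s t : ℝ) (hx1 : (0.65:ℝ) ≤ x) (hx2 : x ≤ 0.85)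
    (hs : 0 ≤ s) (ht : 0 ≤ t)
    (hs2 : s ^ 2 = (x + 0.85) ^ 2 - 1.02 ^ 2)
    (ht2 : t ^ 2 = (x + 0.65) ^ 2 - 0.98 ^ 2) :
    3 * ((x + 0.65) * t ^ m) < (x + 0.85) * s ^ m := by
  have ht2pos : 0 < t ^ 2 := by rw [ht2]; nlinarith
  have htpos : 0 < t := lt_of_le_of_ne ht (by rintro rfl; simp at ht2pos)
  have hspos : 0 < s := by
    have : 0 < s ^ 2 := by rw [hs2]; nlinarith
    exact lt_of_le_of_ne hs (by rintro rfl; simp at this)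
  -- s^2 ≥ 1.33 * t^2
  have hratio : (1.33:ℝ) * t ^ 2 ≤ s ^ 2 := by
    rw [hs2, ht2]; nlinarith [sq_nonneg (x - 0.85)]
  -- compare squares
  have hX : 0 < (x + 0.85) * s ^ m := by positivity
  have hY : 0 ≤ 3 * ((x + 0.65) * t ^ m) := by positivity
  refine lt_of_pow_lt_pow_left₀ 2 (le_of_lt hX) ?_
  have e1 : ((x + 0.85) * s ^ m) ^ 2 = (x + 0.85) ^ 2 * (s ^ 2) ^ m := by
    rw [mul_pow, ← pow_mul, ← pow_mul, Nat.mul_comm]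
  have e2 : (3 * ((x + 0.65) * t ^ m)) ^ 2 = 9 * ((x + 0.65) ^ 2 * (t ^ 2) ^ m) := by
    rw [mul_pow, mul_pow, ← pow_mul, ← pow_mul, Nat.mul_comm]; ring
  rw [e1, e2]
  have h133 : (1.33:ℝ) ^ 7 ≤ (1.33:ℝ) ^ m := by
    apply pow_le_pow_right₀ (by norm_num) hm
  have hsm : ((1.33:ℝ)) ^ m * (t ^ 2) ^ m ≤ (s ^ 2) ^ m := by
    rw [← mul_pow]
    exact pow_le_pow_left₀ (by positivity) hratio m
  have htm : 0 < (t ^ 2) ^ m := by positivity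
  have hstep : 9 * (x + 0.65) ^ 2 < (1.33:ℝ) ^ 7 * (x + 0.85) ^ 2 := by
    nlinarith [sq_nonneg (x - 0.85), sq_nonneg (x - 0.65)]
  have c1 := mul_lt_mul_of_pos_right hstep htm
  have c2 := mul_le_mul_of_nonneg_right
    (mul_le_mul_of_nonneg_right h133 (sq_nonneg (x + 0.85))) htm.le
  have c3 := mul_le_mul_of_nonneg_left hsm (sq_nonneg (x + 0.85))
  nlinarith [c1, c2, c3]

/-- Let `μ = 0.75`, `δ = 0.1`, `ε = 0.01`, `d ≥ 11`.  For
`r ∈ [μ−δ, μ+δ]` set `r̄ = √((r+μ+δ)² − (1+2ε)²)`, `r_ = √((r+μ−δ)² − (1−2ε)²)` and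
`g(r) = r̄^{d−2}/3 − r_^{d−2}`.  Then `g` is increasing on `[μ−δ, μ+δ]`. -/
theorem g_increasing (d : ℕ) (hd : 11 ≤ d) :
    StrictMonoOn
      (fun r : ℝ =>
        (Real.sqrt ((r + 0.75 + 0.1)^2 - (1 + 2*0.01)^2)) ^ (d - 2) / 3
          - (Real.sqrt ((r + 0.75 - 0.1)^2 - (1 - 2*0.01)^2)) ^ (d - 2))
      (Set.Icc ((0.75:ℝ) - 0.1) (0.75 + 0.1)) := by
  have hIcc : ((0.75:ℝ) - 0.1) ≤ (0.75 + 0.1) := by norm_num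
  apply strictMonoOn_of_deriv_pos (convex_Icc _ _)
  · apply Continuous.continuousOn
    fun_prop
  · intro x hx
    rw [interior_Icc] at hx
    obtain ⟨hx1, hx2⟩ := hx
    have hx1' : (0.65:ℝ) ≤ x := by norm_num at hx1 ⊢; linarith
    have hx2' : x ≤ (0.85:ℝ) := by norm_num at hx2 ⊢; linarith
    -- positivity of the radicands
    have hp : (0:ℝ) < (x + 0.75 + 0.1)^2 - (1 + 2*0.01)^2 := by nlinarith
    have hq : (0:ℝ) < (x + 0.75 - 0.1)^2 - (1 - 2*0.01)^2 := by nlinarith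
    -- derivatives
    have h1 : HasDerivAt (fun r : ℝ => (r + 0.75 + 0.1)^2 - (1 + 2*0.01)^2)
        (2 * (x + 0.75 + 0.1)) x := by
      have := (((hasDerivAt_id x).add_const (0.75:ℝ)).add_const (0.1:ℝ)).pow 2
      simpa using this.sub_const ((1 + 2*0.01)^2)
    have h2 : HasDerivAt (fun r : ℝ => (r + 0.75 - 0.1)^2 - (1 - 2*0.01)^2)
        (2 * (x + 0.75 - 0.1)) x := by
      have := (((hasDerivAt_id x).add_const (0.75:ℝ)).sub_const (0.1:ℝ)).pow 2
      simpa using this.sub_const ((1 - 2*0.01)^2)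
    have hsq1 : HasDerivAt (fun r : ℝ => Real.sqrt ((r + 0.75 + 0.1)^2 - (1 + 2*0.01)^2))
        ((2 * (x + 0.75 + 0.1)) / (2 * Real.sqrt ((x + 0.75 + 0.1)^2 - (1 + 2*0.01)^2))) x :=
      h1.sqrt (ne_of_gt hp)
    have hsq2 : HasDerivAt (fun r : ℝ => Real.sqrt ((r + 0.75 - 0.1)^2 - (1 - 2*0.01)^2))
        ((2 * (x + 0.75 - 0.1)) / (2 * Real.sqrt ((x + 0.75 - 0.1)^2 - (1 - 2*0.01)^2))) x :=
      h2.sqrt (ne_of_gt hq)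
    have hF : HasDerivAt (fun r : ℝ =>
        (Real.sqrt ((r + 0.75 + 0.1)^2 - (1 + 2*0.01)^2)) ^ (d - 2) / 3
          - (Real.sqrt ((r + 0.75 - 0.1)^2 - (1 - 2*0.01)^2)) ^ (d - 2))
        ((↑(d-2) * (Real.sqrt ((x + 0.75 + 0.1)^2 - (1 + 2*0.01)^2)) ^ (d - 2 - 1) *
          ((2 * (x + 0.75 + 0.1)) / (2 * Real.sqrt ((x + 0.75 + 0.1)^2 - (1 + 2*0.01)^2)))) / 3
        - ↑(d-2) * (Real.sqrt ((x + 0.75 - 0.1)^2 - (1 - 2*0.01)^2)) ^ (d - 2 - 1) *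
          ((2 * (x + 0.75 - 0.1)) / (2 * Real.sqrt ((x + 0.75 - 0.1)^2 - (1 - 2*0.01)^2)))) x :=
      ((hsq1.pow (d - 2)).div_const 3).sub (hsq2.pow (d - 2))
    rw [hF.deriv]
    set s := Real.sqrt ((x + 0.75 + 0.1)^2 - (1 + 2*0.01)^2) with hs_def
    set t := Real.sqrt ((x + 0.75 - 0.1)^2 - (1 - 2*0.01)^2) with ht_def
    have hs0 : 0 < s := Real.sqrt_pos.mpr hp
    have ht0 : 0 < t := Real.sqrt_pos.mpr hq
    have hs2 : s ^ 2 = (x + 0.85) ^ 2 - 1.02 ^ 2 := by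
      rw [hs_def, Real.sq_sqrt (le_of_lt hp)]; ring
    have ht2 : t ^ 2 = (x + 0.65) ^ 2 - 0.98 ^ 2 := by
      rw [ht_def, Real.sq_sqrt (le_of_lt hq)]; ring
    have hkey := key_ineq (d - 4) (by omega) x s t hx1' hx2' (le_of_lt hs0) (le_of_lt ht0) hs2 ht2
    have hm1 : d - 2 - 1 = (d - 4) + 1 := by omega
    have e1 : (↑(d-2) * s ^ (d - 2 - 1) * ((2 * (x + 0.75 + 0.1)) / (2 * s))) / 3
        = ↑(d-2) * ((x + 0.85) * s ^ (d - 4)) / 3 := by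
      rw [hm1, pow_succ]
      field_simp
      ring
    have e2 : ↑(d-2) * t ^ (d - 2 - 1) * ((2 * (x + 0.75 - 0.1)) / (2 * t))
        = ↑(d-2) * ((x + 0.65) * t ^ (d - 4)) := by
      rw [hm1, pow_succ]
      field_simp
      ring
    rw [e1, e2]
    have hn : (1:ℝ) ≤ (↑(d-2) : ℝ) := by
      have : 1 ≤ d - 2 := by omega
      exact_mod_cast this
    nlinarith [hkey, hn, pow_pos ht0 (d - 4)]
end

section
/- Any hard sphere process on ℝ¹ whose centre process is a homogeneous Poisson process almost surely does not percolate. More precisely: almost surely, for a Poisson process on ℝ there exist infinitely many quadruples of consecutive points x₁ < x₂ < x₃ < x₄ with x₃ − x₂ > (x₂ − x₁) + (x₄ − x₃), and at any such quadruple, non-overlapping intervals centred at x₂ and x₃ which contain no other Poisson points cannot touch; hence the union of the intervals has no unbounded connected component. -/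
open MeasureTheory Metric
open scoped ENNReal

/-- `pp` is a homogeneous Poisson point process of intensity `lam` on `ℝ`. -/
def IsPoissonPPLine {Ω : Type*} [MeasurableSpace Ω] (μ : Measure Ω)
    (lam : ℝ) (pp : Ω → Set ℝ) : Prop :=
  (∀ A : Set ℝ, MeasurableSet A → volume A < ⊤ →
      (∀ᵐ ω ∂μ, (pp ω ∩ A).Finite) ∧
      ∀ n : ℕ,
        μ {ω | (pp ω ∩ A).Finite ∧ (pp ω ∩ A).ncard = n} =
          ENNReal.ofReal (Real.exp (-(lam * (volume A).toReal)) *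
            (lam * (volume A).toReal) ^ n / n.factorial)) ∧
  (∀ A B : Set ℝ, MeasurableSet A → MeasurableSet B → Disjoint A B → ∀ m n : ℕ,
      μ ({ω | (pp ω ∩ A).Finite ∧ (pp ω ∩ A).ncard = m} ∩
          {ω | (pp ω ∩ B).Finite ∧ (pp ω ∩ B).ncard = n}) =
        μ {ω | (pp ω ∩ A).Finite ∧ (pp ω ∩ A).ncard = m} *
          μ {ω | (pp ω ∩ B).Finite ∧ (pp ω ∩ B).ncard = n})

/-- The region covered by the spheres (intervals) of a one-dimensional hard sphere
process with point set `P` and radius function `rad`. -/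
def coveredRegion (P : Set ℝ) (rad : ℝ → ℝ) : Set ℝ :=
  ⋃ x ∈ P, Set.Icc (x - rad x) (x + rad x)

section Aux

variable {Ω : Type*} [MeasurableSpace Ω] (μ : Measure Ω) [IsProbabilityMeasure μ]
  (lam : ℝ) (pp : Ω → Set ℝ)

/-- The count event. -/
def CntEv (A : Set ℝ) (n : ℕ) : Set Ω := {ω | (pp ω ∩ A).Finite ∧ (pp ω ∩ A).ncard = n}

/-- The avoidance event. -/
def EmpEv (A : Set ℝ) : Set Ω := {ω | pp ω ∩ A = ∅}

lemma empEv_eq_cnt (A : Set ℝ) : EmpEv pp A = CntEv pp A 0 := by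
  ext ω
  simp only [EmpEv, CntEv, Set.mem_setOf_eq]
  constructor
  · rintro h; rw [h]; exact ⟨Set.finite_empty, Set.ncard_empty _⟩
  · rintro ⟨hf, h0⟩; exact (Set.ncard_eq_zero hf).1 h0

variable (hlam : 0 < lam)

/-- Hypothesis 1 of `IsPoissonPPLine` unfolded as we use it. -/
def PoisCnt : Prop :=
  ∀ A : Set ℝ, MeasurableSet A → volume A < ⊤ →
      (∀ᵐ ω ∂μ, (pp ω ∩ A).Finite) ∧
      ∀ n : ℕ, μ (CntEv pp A n) =
          ENNReal.ofReal (Real.exp (-(lam * (volume A).toReal)) *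
            (lam * (volume A).toReal) ^ n / n.factorial)

lemma measure_empEv (h : PoisCnt μ lam pp) (A : Set ℝ) (hA : MeasurableSet A)
    (hAv : volume A < ⊤) :
    μ (EmpEv pp A) = ENNReal.ofReal (Real.exp (-(lam * (volume A).toReal))) := by
  rw [empEv_eq_cnt, (h A hA hAv).2 0]
  norm_num

lemma nullMeasurable_empEv (h : PoisCnt μ lam pp) (hlam : 0 < lam) (A : Set ℝ)
    (hA : MeasurableSet A) (hAv : volume A < ⊤) :
    NullMeasurableSet (EmpEv pp A) μ := by
  set t : ℝ := lam * (volume A).toReal with ht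
  have ht0 : 0 ≤ t := mul_nonneg hlam.le ENNReal.toReal_nonneg
  -- the pmf values
  have hsum : HasSum (fun n : ℕ => Real.exp (-t) * t ^ n / n.factorial) 1 := by
    have := ProbabilityTheory.poissonPMFRealSum t.toNNReal
    simpa [ProbabilityTheory.poissonPMFReal, Real.coe_toNNReal t ht0] using this
  have hSummable : Summable (fun n : ℕ => Real.exp (-t) * t ^ n / n.factorial) := hsum.summable
  have htail : ∑' n : ℕ, Real.exp (-t) * t ^ (n + 1) / (n + 1).factorial
      = 1 - Real.exp (-t) := by
    have h0 := Summable.tsum_eq_zero_add hSummable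
    rw [hsum.tsum_eq] at h0
    have : Real.exp (-t) * t ^ 0 / (0:ℕ).factorial = Real.exp (-t) := by norm_num
    rw [this] at h0
    linarith
  have hnonneg : ∀ n : ℕ, 0 ≤ Real.exp (-t) * t ^ (n+1) / (n+1).factorial := by
    intro n; positivity
  -- measure of the complement
  have hEc : μ (EmpEv pp A)ᶜ ≤ ENNReal.ofReal (1 - Real.exp (-t)) := by
    have hsub : (EmpEv pp A)ᶜ ⊆ {ω | ¬ (pp ω ∩ A).Finite} ∪ ⋃ n : ℕ, CntEv pp A (n+1) := by
      intro ω hω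
      simp only [EmpEv, Set.mem_compl_iff, Set.mem_setOf_eq] at hω
      by_cases hf : (pp ω ∩ A).Finite
      · right
        refine Set.mem_iUnion.2 ⟨(pp ω ∩ A).ncard - 1, hf, ?_⟩
        have hpos : 0 < (pp ω ∩ A).ncard := by
          rw [Set.ncard_pos hf]
          exact Set.nonempty_iff_ne_empty.2 hω
        omega
      · left; exact hf
    calc μ (EmpEv pp A)ᶜ ≤ μ ({ω | ¬ (pp ω ∩ A).Finite} ∪ ⋃ n : ℕ, CntEv pp A (n+1)) :=
          measure_mono hsub
      _ ≤ μ {ω | ¬ (pp ω ∩ A).Finite} + μ (⋃ n : ℕ, CntEv pp A (n+1)) := measure_union_le _ _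
      _ ≤ 0 + ∑' n : ℕ, μ (CntEv pp A (n+1)) := by
          gcongr
          · have hz : μ {a | ¬ (pp a ∩ A).Finite} = 0 := ae_iff.mp (h A hA hAv).1
            simpa [Set.compl_setOf] using hz.le
          · exact measure_iUnion_le _
      _ = ∑' n : ℕ, ENNReal.ofReal (Real.exp (-t) * t ^ (n+1) / (n+1).factorial) := by
          rw [zero_add]
          congr 1
          ext n
          rw [(h A hA hAv).2 (n+1)]
      _ = ENNReal.ofReal (1 - Real.exp (-t)) := by
          rw [← ENNReal.ofReal_tsum_of_nonneg hnonneg (by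
            simpa [Function.comp_def] using hSummable.comp_injective (add_left_injective 1))]
          rw [htail]
  -- measure of the set itself
  have hE : μ (EmpEv pp A) = ENNReal.ofReal (Real.exp (-t)) :=
    measure_empEv μ lam pp h A hA hAv
  -- the squeeze
  set K := toMeasurable μ (EmpEv pp A)ᶜ with hK
  have hKmeas : MeasurableSet K := measurableSet_toMeasurable _ _
  have hKc : Kᶜ ⊆ EmpEv pp A := by
    rw [Set.compl_subset_comm]
    simpa using subset_toMeasurable μ (EmpEv pp A)ᶜ
  have hμK : μ K ≤ ENNReal.ofReal (1 - Real.exp (-t)) := by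
    rw [hK, measure_toMeasurable]; exact hEc
  have hμKc : ENNReal.ofReal (Real.exp (-t)) ≤ μ Kᶜ := by
    have := measure_compl hKmeas (measure_ne_top μ K)
    rw [this]
    have h1 : (1:ℝ≥0∞) = ENNReal.ofReal 1 := by simp
    rw [measure_univ]
    calc ENNReal.ofReal (Real.exp (-t))
        ≤ 1 - ENNReal.ofReal (1 - Real.exp (-t)) := by
          rw [h1, ← ENNReal.ofReal_sub _ (sub_nonneg.2 (Real.exp_le_one_iff.2 (by linarith)))]
          have : (1:ℝ) - (1 - Real.exp (-t)) = Real.exp (-t) := by ring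
          rw [this]
      _ ≤ 1 - μ K := by
          gcongr
  -- E \ Kᶜ is null
  have hnull : μ (EmpEv pp A \ Kᶜ) = 0 := by
    have hAH : EmpEv pp A ⊆ toMeasurable μ (EmpEv pp A) := subset_toMeasurable _ _
    have hdiff : EmpEv pp A \ Kᶜ ⊆ toMeasurable μ (EmpEv pp A) \ Kᶜ := by
      exact Set.diff_subset_diff_left hAH
    have hmeasH : MeasurableSet (toMeasurable μ (EmpEv pp A)) := measurableSet_toMeasurable _ _
    have hKcH : Kᶜ ⊆ toMeasurable μ (EmpEv pp A) := hKc.trans hAH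
    have : μ (toMeasurable μ (EmpEv pp A) \ Kᶜ) = μ (toMeasurable μ (EmpEv pp A)) - μ Kᶜ := by
      exact measure_diff hKcH hKmeas.compl.nullMeasurableSet (measure_ne_top μ _)
    have hHE : μ (toMeasurable μ (EmpEv pp A)) = ENNReal.ofReal (Real.exp (-t)) := by
      rw [measure_toMeasurable, hE]
    have hz : μ (toMeasurable μ (EmpEv pp A) \ Kᶜ) = 0 := by
      rw [this, hHE]
      exact tsub_eq_zero_of_le hμKc
    exact measure_mono_null hdiff hz
  -- conclude
  have : EmpEv pp A = Kᶜ ∪ (EmpEv pp A \ Kᶜ) := by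
    rw [Set.union_diff_self]
    exact (Set.union_eq_self_of_subset_left hKc).symm
  rw [this]
  exact (hKmeas.compl.nullMeasurableSet).union (.of_null hnull)

/-- The canonical "empty region + nonempty cells" event. -/
def KeyEv (B : Set ℝ) (l : List (Set ℝ)) : Set Ω :=
  {ω | pp ω ∩ B = ∅ ∧ ∀ C ∈ l, (pp ω ∩ C).Nonempty}

noncomputable def keyVal (B : Set ℝ) (l : List (Set ℝ)) : ℝ :=
  Real.exp (-(lam * (volume B).toReal)) *
    (l.map fun C => 1 - Real.exp (-(lam * (volume C).toReal))).prod

lemma keyVal_nonneg (hlam : 0 < lam) (B : Set ℝ) (l : List (Set ℝ)) :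
    0 ≤ keyVal lam B l := by
  apply mul_nonneg (Real.exp_pos _).le
  apply List.prod_nonneg
  intro a ha
  simp only [List.mem_map] at ha
  obtain ⟨C, _, rfl⟩ := ha
  have : Real.exp (-(lam * (volume C).toReal)) ≤ 1 :=
    Real.exp_le_one_iff.2 (by nlinarith [ENNReal.toReal_nonneg (a := volume C)])
  linarith

lemma list_prod_01 (hlam : 0 < lam) (l : List (Set ℝ)) :
    0 ≤ (l.map fun C => 1 - Real.exp (-(lam * (volume C).toReal))).prod ∧
      (l.map fun C => 1 - Real.exp (-(lam * (volume C).toReal))).prod ≤ 1 := by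
  induction l with
  | nil => simp
  | cons C l ih =>
    simp only [List.map_cons, List.prod_cons]
    have he : Real.exp (-(lam * (volume C).toReal)) ≤ 1 :=
      Real.exp_le_one_iff.2 (by nlinarith [ENNReal.toReal_nonneg (a := volume C)])
    have hep := Real.exp_pos (-(lam * (volume C).toReal))
    constructor
    · apply mul_nonneg (by linarith) ih.1
    · nlinarith [ih.1, ih.2]

lemma keyVal_le_one (hlam : 0 < lam) (B : Set ℝ) (l : List (Set ℝ)) :
    keyVal lam B l ≤ 1 := by
  have h1 : Real.exp (-(lam * (volume B).toReal)) ≤ 1 :=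
    Real.exp_le_one_iff.2 (by nlinarith [ENNReal.toReal_nonneg (a := volume B)])
  have h2 := list_prod_01 lam hlam l
  have h3 := Real.exp_pos (-(lam * (volume B).toReal))
  unfold keyVal
  nlinarith [h2.1, h2.2]

end Aux


section Key2
variable {Ω : Type*} [MeasurableSpace Ω] (μ : Measure Ω) [IsProbabilityMeasure μ]
  (lam : ℝ) (pp : Ω → Set ℝ)

set_option linter.unusedSectionVars false

lemma keyEv_inter_emp (B C : Set ℝ) (l : List (Set ℝ)) :
    KeyEv pp B l ∩ EmpEv pp C = KeyEv pp (B ∪ C) l := by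
  ext ω
  simp only [KeyEv, EmpEv, Set.mem_inter_iff, Set.mem_setOf_eq, Set.inter_union_distrib_left,
    Set.union_empty_iff]
  tauto

lemma keyEv_cons (B C : Set ℝ) (l : List (Set ℝ)) :
    KeyEv pp B (C :: l) = KeyEv pp B l \ EmpEv pp C := by
  ext ω
  simp only [KeyEv, EmpEv, Set.mem_setOf_eq, Set.mem_diff, List.forall_mem_cons,
    ← Set.nonempty_iff_ne_empty]
  tauto

lemma key_main (h : PoisCnt μ lam pp) (hlam : 0 < lam) :
    ∀ (l : List (Set ℝ)) (B : Set ℝ), MeasurableSet B → volume B < ⊤ →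
    (∀ C ∈ l, MeasurableSet C) → (∀ C ∈ l, volume C < ⊤) →
    (∀ C ∈ l, Disjoint B C) → l.Pairwise Disjoint →
    μ (KeyEv pp B l) = ENNReal.ofReal (keyVal lam B l) := by
  intro l
  induction l with
  | nil =>
    intro B hB hBv _ _ _ _
    have : KeyEv pp B ([] : List (Set ℝ)) = EmpEv pp B := by
      ext ω; simp [KeyEv, EmpEv]
    rw [this, measure_empEv μ lam pp h B hB hBv]
    simp [keyVal]
  | cons C l ih =>
    intro B hB hBv hlm hlv hdisj hpw
    have hC : MeasurableSet C := hlm C List.mem_cons_self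
    have hCv : volume C < ⊤ := hlv C List.mem_cons_self
    have hBC : Disjoint B C := hdisj C List.mem_cons_self
    -- measure split
    have hsplit := measure_inter_add_diff₀ (μ := μ) (KeyEv pp B l)
      (nullMeasurable_empEv μ lam pp h hlam C hC hCv)
    rw [keyEv_inter_emp] at hsplit
    -- IH for B and for B ∪ C
    have hIH1 : μ (KeyEv pp B l) = ENNReal.ofReal (keyVal lam B l) := by
      apply ih B hB hBv
      · intro D hD; exact hlm D (List.mem_cons_of_mem _ hD)
      · intro D hD; exact hlv D (List.mem_cons_of_mem _ hD)
      · intro D hD; exact hdisj D (List.mem_cons_of_mem _ hD)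
      · exact hpw.of_cons
    have hIH2 : μ (KeyEv pp (B ∪ C) l) = ENNReal.ofReal (keyVal lam (B ∪ C) l) := by
      apply ih (B ∪ C) (hB.union hC) ((measure_union_le _ _).trans_lt
        (by exact ENNReal.add_lt_top.2 ⟨hBv, hCv⟩))
      · intro D hD; exact hlm D (List.mem_cons_of_mem _ hD)
      · intro D hD; exact hlv D (List.mem_cons_of_mem _ hD)
      · intro D hD
        exact Disjoint.union_left (hdisj D (List.mem_cons_of_mem _ hD))
          ((List.pairwise_cons.1 hpw).1 D hD)
      · exact hpw.of_cons
    -- volume of the union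
    have hvol : (volume (B ∪ C)).toReal = (volume B).toReal + (volume C).toReal := by
      rw [measure_union hBC hC]
      exact ENNReal.toReal_add hBv.ne hCv.ne
    -- real arithmetic
    set eB := Real.exp (-(lam * (volume B).toReal)) with heB
    set eC := Real.exp (-(lam * (volume C).toReal)) with heC
    set P := (l.map fun D => 1 - Real.exp (-(lam * (volume D).toReal))).prod with hP
    have hexp : Real.exp (-(lam * ((volume B).toReal + (volume C).toReal))) = eB * eC := by
      rw [heB, heC, ← Real.exp_add]; congr 1; ring
    have hval2 : keyVal lam (B ∪ C) l = eB * eC * P := by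
      unfold keyVal
      rw [hvol, hexp]
    have hval1 : keyVal lam B l = eB * P := rfl
    have hvalg : keyVal lam B (C :: l) = eB * ((1 - eC) * P) := by
      unfold keyVal
      simp only [List.map_cons, List.prod_cons]
      try ring
    have hP0 : 0 ≤ P := (list_prod_01 lam hlam l).1
    have heC1 : eC ≤ 1 := Real.exp_le_one_iff.2
      (by nlinarith [ENNReal.toReal_nonneg (a := volume C)])
    have heC0 : 0 < eC := Real.exp_pos _
    have heB0 : 0 < eB := Real.exp_pos _
    -- combine
    rw [hIH1, hIH2] at hsplit
    rw [keyEv_cons]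
    have hofsum : ENNReal.ofReal (keyVal lam (B ∪ C) l)
        + ENNReal.ofReal (eB * ((1 - eC) * P)) = ENNReal.ofReal (keyVal lam B l) := by
      rw [← ENNReal.ofReal_add (by rw [hval2]; positivity) (mul_nonneg heB0.le (mul_nonneg (by linarith) hP0)), hval2, hval1]
      congr 1
      ring
    rw [hvalg]
    have hfin : ENNReal.ofReal (keyVal lam (B ∪ C) l) ≠ ⊤ := ENNReal.ofReal_ne_top
    rw [← hofsum] at hsplit
    exact ((ENNReal.add_right_inj hfin).1 hsplit)

end Key2

section Blocks
variable {Ω : Type*} [MeasurableSpace Ω] (μ : Measure Ω) [IsProbabilityMeasure μ]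
  (lam : ℝ) (pp : Ω → Set ℝ)

set_option linter.unusedSectionVars false

def cellsL (a : ℝ) : List (Set ℝ) :=
  [Set.Ioc a (a+1), Set.Ioc (a+1) (a+2), Set.Ioc (a+7) (a+8), Set.Ioc (a+8) (a+9)]

def midI (a : ℝ) : Set ℝ := Set.Ioc (a+2) (a+7)

def blockI (a : ℝ) : Set ℝ := Set.Ioc a (a+9)

/-- The block pattern event. -/
def FEv (a : ℝ) : Set Ω := KeyEv pp (midI a) (cellsL a)

noncomputable def qv : ℝ := Real.exp (-(lam*5)) * (1 - Real.exp (-lam)) ^ 4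

lemma Ioc_disj {a b c d : ℝ} (h : b ≤ c) : Disjoint (Set.Ioc a b) (Set.Ioc c d) := by
  rw [Set.disjoint_left]
  rintro x ⟨_, h1⟩ ⟨h2, _⟩
  linarith

lemma vol_Ioc_toReal {a b : ℝ} (h : a ≤ b) : (volume (Set.Ioc a b)).toReal = b - a := by
  rw [Real.volume_Ioc, ENNReal.toReal_ofReal (by linarith)]

lemma cells_subset_block (a : ℝ) : ∀ C ∈ cellsL a, C ⊆ blockI a := by
  intro C hC
  simp only [cellsL, List.mem_cons, List.not_mem_nil, or_false] at hC
  rcases hC with rfl | rfl | rfl | rfl <;>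
    · intro x hx; exact ⟨by cases hx; linarith, by cases hx; linarith⟩

lemma mid_subset_block (a : ℝ) : midI a ⊆ blockI a := by
  intro x hx; exact ⟨by cases hx; linarith, by cases hx; linarith⟩

lemma cells_measurable (a : ℝ) : ∀ C ∈ cellsL a, MeasurableSet C := by
  intro C hC
  simp only [cellsL, List.mem_cons, List.not_mem_nil, or_false] at hC
  rcases hC with rfl | rfl | rfl | rfl <;> exact measurableSet_Ioc

lemma cells_vol (a : ℝ) : ∀ C ∈ cellsL a, volume C < ⊤ := by
  intro C hC
  simp only [cellsL, List.mem_cons, List.not_mem_nil, or_false] at hC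
  rcases hC with rfl | rfl | rfl | rfl <;>
    · rw [Real.volume_Ioc]; exact ENNReal.ofReal_lt_top

lemma cells_pairwise (a : ℝ) : (cellsL a).Pairwise Disjoint := by
  unfold cellsL
  refine .cons (fun C hC => ?_) (.cons (fun C hC => ?_)
    (.cons (fun C hC => ?_) (.cons (fun C hC => ?_) .nil)))
  all_goals fin_cases hC <;> exact Ioc_disj (by linarith)

lemma mid_disj_cells (a : ℝ) : ∀ C ∈ cellsL a, Disjoint (midI a) C := by
  intro C hC
  simp only [cellsL, List.mem_cons, List.not_mem_nil, or_false] at hC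
  rcases hC with rfl | rfl | rfl | rfl
  · exact (Ioc_disj (by linarith)).symm
  · exact (Ioc_disj (by linarith)).symm
  · exact Ioc_disj (by linarith)
  · exact Ioc_disj (by linarith)

lemma keyVal_FEv (hlam : 0 < lam) (a : ℝ) : keyVal lam (midI a) (cellsL a) = qv lam := by
  unfold keyVal qv cellsL midI
  rw [vol_Ioc_toReal (by linarith)]
  simp only [List.map_cons, List.map_nil, List.prod_cons, List.prod_nil]
  rw [vol_Ioc_toReal (by linarith), vol_Ioc_toReal (by linarith),
    vol_Ioc_toReal (by linarith), vol_Ioc_toReal (by linarith)]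
  ring_nf

lemma qv_pos (hlam : 0 < lam) : 0 < qv lam := by
  unfold qv
  have h1 : (0:ℝ) < 1 - Real.exp (-lam) := by
    have : Real.exp (-lam) < 1 := Real.exp_lt_one_iff.2 (by linarith)
    linarith
  exact mul_pos (Real.exp_pos _) (pow_pos h1 4)

lemma qv_le_one (hlam : 0 < lam) : qv lam ≤ 1 := by
  have := keyVal_FEv lam hlam 0
  rw [← this]
  exact keyVal_le_one lam hlam _ _

lemma nm_KeyEv (h : PoisCnt μ lam pp) (hlam : 0 < lam) (B : Set ℝ) (l : List (Set ℝ))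
    (hB : MeasurableSet B) (hBv : volume B < ⊤)
    (hlm : ∀ C ∈ l, MeasurableSet C) (hlv : ∀ C ∈ l, volume C < ⊤) :
    NullMeasurableSet (KeyEv pp B l) μ := by
  induction l with
  | nil =>
    have : KeyEv pp B ([] : List (Set ℝ)) = EmpEv pp B := by
      ext ω; simp [KeyEv, EmpEv]
    rw [this]
    exact nullMeasurable_empEv μ lam pp h hlam B hB hBv
  | cons C l ih =>
    rw [keyEv_cons]
    exact (ih (fun D hD => hlm D (List.mem_cons_of_mem _ hD))
        (fun D hD => hlv D (List.mem_cons_of_mem _ hD))).diff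
      (nullMeasurable_empEv μ lam pp h hlam C (hlm C List.mem_cons_self)
        (hlv C List.mem_cons_self))

lemma nm_FEv (h : PoisCnt μ lam pp) (hlam : 0 < lam) (a : ℝ) :
    NullMeasurableSet (FEv pp a) μ :=
  nm_KeyEv μ lam pp h hlam _ _ measurableSet_Ioc
    (by rw [midI, Real.volume_Ioc]; exact ENNReal.ofReal_lt_top)
    (cells_measurable a) (cells_vol a)

lemma keyEv_inter_keyEv (B₁ B₂ : Set ℝ) (l₁ l₂ : List (Set ℝ)) :
    KeyEv pp B₁ l₁ ∩ KeyEv pp B₂ l₂ = KeyEv pp (B₁ ∪ B₂) (l₁ ++ l₂) := by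
  ext ω
  simp only [KeyEv, Set.mem_inter_iff, Set.mem_setOf_eq, Set.inter_union_distrib_left,
    Set.union_empty_iff, List.forall_mem_append]
  tauto

end Blocks

section Main
variable {Ω : Type*} [MeasurableSpace Ω] (μ : Measure Ω) [IsProbabilityMeasure μ]
  (lam : ℝ) (pp : Ω → Set ℝ)

set_option linter.unusedSectionVars false

lemma main_count (h : PoisCnt μ lam pp) (hlam : 0 < lam) (g : ℕ → ℝ)
    (hgd : ∀ j k : ℕ, j ≠ k → Disjoint (blockI (g j)) (blockI (g k))) :
    ∀ (S : Finset ℕ) (B : Set ℝ) (l : List (Set ℝ)),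
    MeasurableSet B → volume B < ⊤ →
    (∀ C ∈ l, MeasurableSet C) → (∀ C ∈ l, volume C < ⊤) →
    (∀ C ∈ l, Disjoint B C) → l.Pairwise Disjoint →
    (∀ k ∈ S, Disjoint (blockI (g k)) B) →
    (∀ k ∈ S, ∀ C ∈ l, Disjoint (blockI (g k)) C) →
    μ (KeyEv pp B l ∩ ⋂ k ∈ S, (FEv pp (g k))ᶜ)
      = ENNReal.ofReal (keyVal lam B l * (1 - qv lam) ^ S.card) := by
  intro S
  induction S using Finset.induction_on with
  | empty =>
    intro B l hB hBv hlm hlv hd hpw _ _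
    simp only [Finset.notMem_empty, Set.iInter_of_empty, Set.iInter_univ, Set.inter_univ,
      Finset.card_empty, pow_zero, mul_one]
    exact key_main μ lam pp h hlam l B hB hBv hlm hlv hd hpw
  | @insert j S hj ih =>
    intro B l hB hBv hlm hlv hd hpw hSB hSl
    have hq0 := qv_pos lam hlam
    have hq1 := qv_le_one lam hlam
    -- set rearrangement
    have hset : KeyEv pp B l ∩ ⋂ k ∈ insert j S, (FEv pp (g k))ᶜ
        = (KeyEv pp B l ∩ ⋂ k ∈ S, (FEv pp (g k))ᶜ) \ FEv pp (g j) := by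
      rw [Finset.set_biInter_insert]
      ext ω
      simp only [Set.mem_inter_iff, Set.mem_diff, Set.mem_compl_iff, Set.mem_iInter]
      tauto
    have hsetF : (KeyEv pp B l ∩ ⋂ k ∈ S, (FEv pp (g k))ᶜ) ∩ FEv pp (g j)
        = KeyEv pp (B ∪ midI (g j)) (l ++ cellsL (g j)) ∩ ⋂ k ∈ S, (FEv pp (g k))ᶜ := by
      rw [← keyEv_inter_keyEv]
      show _ = KeyEv pp B l ∩ FEv pp (g j) ∩ _
      ext ω
      simp only [Set.mem_inter_iff]
      tauto
    -- hypotheses for the extended pair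
    have hjmem : j ∈ insert j S := Finset.mem_insert_self j S
    have hBblock : Disjoint (blockI (g j)) B := hSB j hjmem
    have hlblock : ∀ C ∈ l, Disjoint (blockI (g j)) C := hSl j hjmem
    have hBm : MeasurableSet (B ∪ midI (g j)) := hB.union measurableSet_Ioc
    have hBmv : volume (B ∪ midI (g j)) < ⊤ := by
      refine (measure_union_le _ _).trans_lt (ENNReal.add_lt_top.2 ⟨hBv, ?_⟩)
      rw [midI, Real.volume_Ioc]; exact ENNReal.ofReal_lt_top
    have hlm' : ∀ C ∈ l ++ cellsL (g j), MeasurableSet C := by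
      intro C hC
      rcases List.mem_append.1 hC with hC | hC
      exacts [hlm C hC, cells_measurable _ C hC]
    have hlv' : ∀ C ∈ l ++ cellsL (g j), volume C < ⊤ := by
      intro C hC
      rcases List.mem_append.1 hC with hC | hC
      exacts [hlv C hC, cells_vol _ C hC]
    have hd' : ∀ C ∈ l ++ cellsL (g j), Disjoint (B ∪ midI (g j)) C := by
      intro C hC
      rcases List.mem_append.1 hC with hC | hC
      · exact Disjoint.union_left (hd C hC)
          (((hlblock C hC).mono_left (mid_subset_block _)).symm.symm)
      · refine Disjoint.union_left ?_ (mid_disj_cells _ C hC)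
        exact (hBblock.symm.mono_right (cells_subset_block _ C hC)).symm.symm
    have hpw' : (l ++ cellsL (g j)).Pairwise Disjoint := by
      rw [List.pairwise_append]
      refine ⟨hpw, cells_pairwise _, fun C hC D hD => ?_⟩
      exact (hlblock C hC).symm.mono_right (cells_subset_block _ D hD)
    have hSB' : ∀ k ∈ S, Disjoint (blockI (g k)) (B ∪ midI (g j)) := by
      intro k hk
      refine Disjoint.union_right (hSB k (Finset.mem_insert_of_mem hk)) ?_
      exact (hgd k j (by rintro rfl; exact hj hk)).mono_right (mid_subset_block _)
    have hSl' : ∀ k ∈ S, ∀ C ∈ l ++ cellsL (g j), Disjoint (blockI (g k)) C := by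
      intro k hk C hC
      rcases List.mem_append.1 hC with hC | hC
      · exact hSl k (Finset.mem_insert_of_mem hk) C hC
      · exact (hgd k j (by rintro rfl; exact hj hk)).mono_right (cells_subset_block _ C hC)
    have hSB0 : ∀ k ∈ S, Disjoint (blockI (g k)) B :=
      fun k hk => hSB k (Finset.mem_insert_of_mem hk)
    have hSl0 : ∀ k ∈ S, ∀ C ∈ l, Disjoint (blockI (g k)) C :=
      fun k hk => hSl k (Finset.mem_insert_of_mem hk)
    -- the two IH instances
    have hIH1 := ih B l hB hBv hlm hlv hd hpw hSB0 hSl0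
    have hIH2 := ih (B ∪ midI (g j)) (l ++ cellsL (g j)) hBm hBmv hlm' hlv' hd' hpw' hSB' hSl'
    -- value of the extended key
    have hvolm : (volume (B ∪ midI (g j))).toReal = (volume B).toReal + 5 := by
      rw [measure_union (hBblock.symm.mono_right (mid_subset_block _)).symm.symm measurableSet_Ioc]
      rw [ENNReal.toReal_add hBv.ne (by rw [midI, Real.volume_Ioc]; exact ENNReal.ofReal_ne_top)]
      rw [show volume (midI (g j)) = volume (Set.Ioc (g j + 2) (g j + 7)) from rfl]
      rw [vol_Ioc_toReal (by linarith)]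
      ring
    have hval2 : keyVal lam (B ∪ midI (g j)) (l ++ cellsL (g j)) = keyVal lam B l * qv lam := by
      unfold keyVal
      rw [hvolm, List.map_append, List.prod_append]
      have hexp : Real.exp (-(lam * ((volume B).toReal + 5)))
          = Real.exp (-(lam * (volume B).toReal)) * Real.exp (-(lam * 5)) := by
        rw [← Real.exp_add]; congr 1; ring
      have hcells : ((cellsL (g j)).map fun C => 1 - Real.exp (-(lam * (volume C).toReal))).prod
          = (1 - Real.exp (-lam)) ^ 4 := by
        have h1 := keyVal_FEv lam hlam (g j)
        unfold keyVal qv at h1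
        have hm : (volume (midI (g j))).toReal = 5 := by
          rw [show volume (midI (g j)) = volume (Set.Ioc (g j + 2) (g j + 7)) from rfl,
            vol_Ioc_toReal (by linarith)]; ring
        rw [hm] at h1
        have he := Real.exp_pos (-(lam * 5))
        field_simp at h1 ⊢
        nlinarith [h1]
      rw [hexp, hcells]
      unfold qv
      ring
    -- combine via subtraction
    rw [hset]
    have hsplit := measure_inter_add_diff₀ (μ := μ)
      (KeyEv pp B l ∩ ⋂ k ∈ S, (FEv pp (g k))ᶜ) (nm_FEv μ lam pp h hlam (g j))
    rw [hsetF, hIH2, hIH1, hval2] at hsplit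
    have hV0 := keyVal_nonneg lam hlam B l
    have hpow0 : (0:ℝ) ≤ (1 - qv lam) ^ S.card := pow_nonneg (by linarith) _
    have hofsum : ENNReal.ofReal (keyVal lam B l * qv lam * (1 - qv lam) ^ S.card)
        + ENNReal.ofReal (keyVal lam B l * (1 - qv lam) ^ (insert j S).card)
        = ENNReal.ofReal (keyVal lam B l * (1 - qv lam) ^ S.card) := by
      rw [Finset.card_insert_of_notMem hj]
      rw [← ENNReal.ofReal_add (by positivity)
        (mul_nonneg hV0 (pow_nonneg (by linarith) _))]
      congr 1
      rw [pow_succ]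
      ring
    rw [← hofsum] at hsplit
    exact (ENNReal.add_right_inj ENNReal.ofReal_ne_top).1 hsplit

end Main

section AEfreq
variable {Ω : Type*} [MeasurableSpace Ω] (μ : Measure Ω) [IsProbabilityMeasure μ]
  (lam : ℝ) (pp : Ω → Set ℝ)

set_option linter.unusedSectionVars false

lemma ae_freq (h : PoisCnt μ lam pp) (hlam : 0 < lam) (g : ℕ → ℝ)
    (hgd : ∀ j k : ℕ, j ≠ k → Disjoint (blockI (g j)) (blockI (g k))) :
    ∀ᵐ ω ∂μ, ∀ K : ℕ, ∃ k, K ≤ k ∧ ω ∈ FEv pp (g k) := by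
  have hq0 := qv_pos lam hlam
  have hq1 := qv_le_one lam hlam
  -- the basic estimate
  have hN : ∀ K N : ℕ, μ {ω | ∀ k, K ≤ k → ω ∉ FEv pp (g k)}
      ≤ ENNReal.ofReal ((1 - qv lam) ^ N) := by
    intro K N
    have hsub : {ω | ∀ k, K ≤ k → ω ∉ FEv pp (g k)}
        ⊆ KeyEv pp ∅ [] ∩ ⋂ k ∈ Finset.Ico K (K + N), (FEv pp (g k))ᶜ := by
      intro ω hω
      refine ⟨⟨by simp, by simp⟩, ?_⟩
      simp only [Set.mem_iInter, Set.mem_compl_iff]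
      intro k hk
      exact hω k (Finset.mem_Ico.1 hk).1
    refine (measure_mono hsub).trans_eq ?_
    rw [main_count μ lam pp h hlam g hgd (Finset.Ico K (K + N)) ∅ []
      MeasurableSet.empty (by simp) (by simp) (by simp) (by simp) (by simp)
      (fun k _ => Set.disjoint_empty _) (by simp)]
    congr 1
    have : keyVal lam ∅ [] = 1 := by
      unfold keyVal
      simp
    rw [this, Nat.card_Ico, one_mul]
    congr 1
    omega
  -- each tail event is null
  have hnull : ∀ K : ℕ, μ {ω | ∀ k, K ≤ k → ω ∉ FEv pp (g k)} = 0 := by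
    intro K
    have htend : Filter.Tendsto (fun N : ℕ => ENNReal.ofReal ((1 - qv lam) ^ N))
        Filter.atTop (nhds 0) := by
      have : Filter.Tendsto (fun N : ℕ => (1 - qv lam) ^ N) Filter.atTop (nhds 0) :=
        tendsto_pow_atTop_nhds_zero_of_lt_one (by linarith) (by linarith)
      simpa using ENNReal.tendsto_ofReal this
    have := ge_of_tendsto htend (Filter.Eventually.of_forall (hN K))
    exact le_zero_iff.1 this
  -- conclude
  rw [ae_iff]
  have hsub : {ω | ¬ ∀ K : ℕ, ∃ k, K ≤ k ∧ ω ∈ FEv pp (g k)}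
      ⊆ ⋃ K : ℕ, {ω | ∀ k, K ≤ k → ω ∉ FEv pp (g k)} := by
    intro ω hω
    simp only [Set.mem_setOf_eq, not_forall, not_exists] at hω
    obtain ⟨K, hK⟩ := hω
    refine Set.mem_iUnion.2 ⟨K, fun k hk hmem => ?_⟩
    exact (hK k) ⟨hk, hmem⟩
  refine measure_mono_null hsub ?_
  exact measure_iUnion_null fun K => hnull K

end AEfreq

section Det

lemma quad_of_block (P : Set ℝ) (a : ℝ) (hfin : (P ∩ Set.Ioc a (a+9)).Finite)
    (hmid : P ∩ midI a = ∅) (hcells : ∀ C ∈ cellsL a, (P ∩ C).Nonempty) :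
    ∃ x₁ x₂ x₃ x₄, x₁ ∈ P ∧ x₂ ∈ P ∧ x₃ ∈ P ∧ x₄ ∈ P ∧ x₁ < x₂ ∧ x₂ < x₃ ∧ x₃ < x₄ ∧
      P ∩ Set.Ioo x₁ x₂ = ∅ ∧ P ∩ Set.Ioo x₂ x₃ = ∅ ∧ P ∩ Set.Ioo x₃ x₄ = ∅ ∧
      x₃ - x₂ > (x₂ - x₁) + (x₄ - x₃) ∧ a < x₁ ∧ x₂ ≤ a + 2 ∧ a + 7 < x₃ ∧ x₄ ≤ a + 9 := by
  obtain ⟨c1, hc1P, hc1⟩ := hcells (Set.Ioc a (a+1)) (by simp [cellsL])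
  obtain ⟨c2, hc2P, hc2⟩ := hcells (Set.Ioc (a+1) (a+2)) (by simp [cellsL])
  obtain ⟨c3, hc3P, hc3⟩ := hcells (Set.Ioc (a+7) (a+8)) (by simp [cellsL])
  obtain ⟨c4, hc4P, hc4⟩ := hcells (Set.Ioc (a+8) (a+9)) (by simp [cellsL])
  -- left pair
  set S : Set ℝ := P ∩ Set.Ioc a (a+2) with hSdef
  have hS : S.Finite := hfin.subset (by
    rintro x ⟨h1, h2, h3⟩; exact ⟨h1, h2, by linarith⟩)
  have hc1S : c1 ∈ S := ⟨hc1P, hc1.1, by linarith [hc1.2]⟩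
  have hc2S : c2 ∈ S := ⟨hc2P, by linarith [hc2.1], hc2.2⟩
  have hc12 : c1 ≠ c2 := by intro h; rw [h] at hc1; linarith [hc1.2, hc2.1]
  set F : Finset ℝ := hS.toFinset with hF
  have hmemF : ∀ y, y ∈ F ↔ y ∈ S := fun y => hS.mem_toFinset
  have hFne : F.Nonempty := ⟨c1, (hmemF c1).2 hc1S⟩
  set x₂ := F.max' hFne with hx2def
  have hx₂S : x₂ ∈ S := (hmemF _).1 (F.max'_mem hFne)
  have hmax : ∀ y ∈ S, y ≤ x₂ := fun y hy => F.le_max' y ((hmemF y).2 hy)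
  have hF'ne : (F.erase x₂).Nonempty := by
    rcases eq_or_ne c1 x₂ with h | h
    · exact ⟨c2, Finset.mem_erase.2 ⟨by rw [← h]; exact hc12.symm, (hmemF c2).2 hc2S⟩⟩
    · exact ⟨c1, Finset.mem_erase.2 ⟨h, (hmemF c1).2 hc1S⟩⟩
  set x₁ := (F.erase x₂).max' hF'ne with hx1def
  have hx₁mem := (F.erase x₂).max'_mem hF'ne
  have hx₁S : x₁ ∈ S := (hmemF _).1 (Finset.mem_of_mem_erase hx₁mem)
  have hx₁ne : x₁ ≠ x₂ := Finset.ne_of_mem_erase hx₁mem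
  have hx₁₂ : x₁ < x₂ := lt_of_le_of_ne (hmax x₁ hx₁S) hx₁ne
  have hsec : ∀ y ∈ S, y ≠ x₂ → y ≤ x₁ := fun y hy hne =>
    (F.erase x₂).le_max' y (Finset.mem_erase.2 ⟨hne, (hmemF y).2 hy⟩)
  -- right pair
  set S' : Set ℝ := P ∩ Set.Ioc (a+7) (a+9) with hS'def
  have hS' : S'.Finite := hfin.subset (by
    rintro x ⟨h1, h2, h3⟩; exact ⟨h1, by linarith, h3⟩)
  have hc3S : c3 ∈ S' := ⟨hc3P, hc3.1, by linarith [hc3.2]⟩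
  have hc4S : c4 ∈ S' := ⟨hc4P, by linarith [hc4.1], hc4.2⟩
  have hc34 : c3 ≠ c4 := by intro h; rw [h] at hc3; linarith [hc3.2, hc4.1]
  set G : Finset ℝ := hS'.toFinset with hG
  have hmemG : ∀ y, y ∈ G ↔ y ∈ S' := fun y => hS'.mem_toFinset
  have hGne : G.Nonempty := ⟨c3, (hmemG c3).2 hc3S⟩
  set x₃ := G.min' hGne with hx3def
  have hx₃S : x₃ ∈ S' := (hmemG _).1 (G.min'_mem hGne)
  have hmin : ∀ y ∈ S', x₃ ≤ y := fun y hy => G.min'_le y ((hmemG y).2 hy)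
  have hG'ne : (G.erase x₃).Nonempty := by
    rcases eq_or_ne c3 x₃ with h | h
    · exact ⟨c4, Finset.mem_erase.2 ⟨by rw [← h]; exact hc34.symm, (hmemG c4).2 hc4S⟩⟩
    · exact ⟨c3, Finset.mem_erase.2 ⟨h, (hmemG c3).2 hc3S⟩⟩
  set x₄ := (G.erase x₃).min' hG'ne with hx4def
  have hx₄mem := (G.erase x₃).min'_mem hG'ne
  have hx₄S : x₄ ∈ S' := (hmemG _).1 (Finset.mem_of_mem_erase hx₄mem)
  have hx₄ne : x₄ ≠ x₃ := Finset.ne_of_mem_erase hx₄mem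
  have hx₃₄ : x₃ < x₄ := lt_of_le_of_ne (hmin x₄ hx₄S) (hx₄ne.symm)
  have hsec' : ∀ y ∈ S', y ≠ x₃ → x₄ ≤ y := fun y hy hne =>
    (G.erase x₃).min'_le y (Finset.mem_erase.2 ⟨hne, (hmemG y).2 hy⟩)
  -- location facts
  obtain ⟨hx₁P, hx₁a, hx₁b⟩ := hx₁S
  obtain ⟨hx₂P, hx₂a, hx₂b⟩ := hx₂S
  obtain ⟨hx₃P, hx₃a, hx₃b⟩ := hx₃S
  obtain ⟨hx₄P, hx₄a, hx₄b⟩ := hx₄S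
  have hx₂₃ : x₂ < x₃ := by linarith
  have hmid' : ∀ y, y ∈ P → y ∈ midI a → False := by
    intro y hyP hym
    exact Set.eq_empty_iff_forall_notMem.1 hmid y ⟨hyP, hym⟩
  refine ⟨x₁, x₂, x₃, x₄, hx₁P, hx₂P, hx₃P, hx₄P, hx₁₂, hx₂₃, hx₃₄, ?_, ?_, ?_, ?_, ?_, ?_, ?_, ?_⟩
  · rw [Set.eq_empty_iff_forall_notMem]
    rintro y ⟨hyP, hy1, hy2⟩
    have hyS : y ∈ S := ⟨hyP, by linarith, by linarith⟩
    have := hsec y hyS (by linarith)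
    linarith
  · rw [Set.eq_empty_iff_forall_notMem]
    rintro y ⟨hyP, hy1, hy2⟩
    rcases le_or_gt y (a+2) with hc | hc
    · have hyS : y ∈ S := ⟨hyP, by linarith, hc⟩
      linarith [hmax y hyS]
    · rcases le_or_gt y (a+7) with hc' | hc'
      · exact hmid' y hyP ⟨hc, hc'⟩
      · have hyS : y ∈ S' := ⟨hyP, hc', by linarith⟩
        linarith [hmin y hyS]
  · rw [Set.eq_empty_iff_forall_notMem]
    rintro y ⟨hyP, hy1, hy2⟩
    have hyS : y ∈ S' := ⟨hyP, by linarith, by linarith⟩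
    have := hsec' y hyS (by linarith)
    linarith
  · linarith
  · linarith
  · linarith
  · linarith
  · linarith

end Det

section Det2

lemma cutpoint (P : Set ℝ) (r : ℝ → ℝ) (hr0 : ∀ x ∈ P, 0 ≤ r x)
    (hsep : ∀ x ∈ P, ∀ y ∈ P, x ≠ y → r x + r y ≤ |x - y|)
    {x₁ x₂ x₃ x₄ : ℝ} (h1P : x₁ ∈ P) (h2P : x₂ ∈ P) (h3P : x₃ ∈ P) (h4P : x₄ ∈ P)
    (h12 : x₁ < x₂) (h23 : x₂ < x₃) (h34 : x₃ < x₄)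
    (hIoo : P ∩ Set.Ioo x₂ x₃ = ∅)
    (hgap : x₃ - x₂ > (x₂ - x₁) + (x₄ - x₃)) :
    ∃ y, x₂ ≤ y ∧ y ≤ x₃ ∧ y ∉ coveredRegion P r := by
  set u := 2*x₂ - x₁ with hu
  set v := 2*x₃ - x₄ with hv
  have huv : u < v := by rw [hu, hv]; linarith
  refine ⟨(u+v)/2, by rw [hu, hv]; linarith, by rw [hu, hv]; linarith, ?_⟩
  set y := (u+v)/2 with hy
  have hyu : u < y := by rw [hy]; linarith
  have hyv : y < v := by rw [hy]; linarith
  intro hmem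
  rw [coveredRegion, Set.mem_iUnion₂] at hmem
  obtain ⟨x, hxP, hyIcc⟩ := hmem
  obtain ⟨hylb, hyub⟩ := hyIcc
  have hr2 : r x₂ ≤ x₂ - x₁ := by
    have := hsep x₁ h1P x₂ h2P (ne_of_lt h12)
    rw [abs_of_neg (by linarith)] at this
    linarith [hr0 x₁ h1P]
  have hr3 : r x₃ ≤ x₄ - x₃ := by
    have := hsep x₃ h3P x₄ h4P (ne_of_lt h34)
    rw [abs_of_neg (by linarith)] at this
    linarith [hr0 x₄ h4P]
  rcases lt_trichotomy x x₂ with hx | hx | hx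
  · have := hsep x hxP x₂ h2P (ne_of_lt hx)
    rw [abs_of_neg (by linarith)] at this
    have hxr : x + r x ≤ x₂ := by linarith [hr0 x₂ h2P]
    have : y ≤ x₂ := le_trans hyub hxr
    rw [hy, hu, hv] at this
    linarith
  · rw [hx] at hyub
    have : y ≤ u := by rw [hu]; linarith
    linarith
  · rcases lt_trichotomy x x₃ with hx' | hx' | hx'
    · exact Set.eq_empty_iff_forall_notMem.1 hIoo x ⟨hxP, hx, hx'⟩
    · rw [hx'] at hylb
      have : v ≤ y := by rw [hv]; linarith
      linarith
    · have := hsep x₃ h3P x hxP (ne_of_lt hx')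
      rw [abs_of_neg (by linarith)] at this
      have hxr : x₃ ≤ x - r x := by linarith [hr0 x₃ h3P]
      have hyx₃ : x₃ ≤ y := le_trans hxr hylb
      rw [hy, hu, hv] at hyx₃
      linarith

lemma bounded_components (P : Set ℝ) (r : ℝ → ℝ)
    (hcutR : ∀ R : ℝ, ∃ y, R < y ∧ y ∉ coveredRegion P r)
    (hcutL : ∀ R : ℝ, ∃ y, y < R ∧ y ∉ coveredRegion P r) :
    ∀ z ∈ coveredRegion P r,
      Bornology.IsBounded (connectedComponentIn (coveredRegion P r) z) := by
  intro z hz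
  obtain ⟨yR, hyR, hyRnc⟩ := hcutR z
  obtain ⟨yL, hyL, hyLnc⟩ := hcutL z
  have hC : connectedComponentIn (coveredRegion P r) z ⊆ Set.Ioo yL yR := by
    intro w hw
    have hord : (connectedComponentIn (coveredRegion P r) z).OrdConnected :=
      (isPreconnected_connectedComponentIn).ordConnected
    have hzC : z ∈ connectedComponentIn (coveredRegion P r) z := mem_connectedComponentIn hz
    have hsub := connectedComponentIn_subset (coveredRegion P r) z
    constructor
    · by_contra hcon
      push_neg at hcon
      have : yL ∈ Set.Icc w z := ⟨hcon, le_of_lt hyL⟩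
      exact hyLnc (hsub (hord.out hw hzC this))
    · by_contra hcon
      push_neg at hcon
      have : yR ∈ Set.Icc z w := ⟨le_of_lt hyR, hcon⟩
      exact hyRnc (hsub (hord.out hzC hw this))
  exact (Metric.isBounded_Ioo yL yR).subset hC

end Det2

/-- Any hard sphere process on `ℝ¹` whose centre process is a
homogeneous Poisson process almost surely does not percolate: almost surely there are
infinitely many quadruples of consecutive Poisson points `x₁ < x₂ < x₃ < x₄` with
`x₃ − x₂ > (x₂ − x₁) + (x₄ − x₃)`, and every connected component of the union of the
intervals is bounded. -/
theorem one_dim_no_percolation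
    {Ω : Type*} [MeasurableSpace Ω] (μ : Measure Ω) [IsProbabilityMeasure μ]
    (lam : ℝ) (hlam : 0 < lam)
    (pp : Ω → Set ℝ) (hPP : IsPoissonPPLine μ lam pp)
    (rad : Ω → ℝ → ℝ)
    -- the radii are non-negative and the intervals have disjoint interiors:
    (hhard : ∀ᵐ ω ∂μ, (∀ x ∈ pp ω, 0 ≤ rad ω x) ∧
      ∀ x ∈ pp ω, ∀ y ∈ pp ω, x ≠ y → rad ω x + rad ω y ≤ |x - y|) :
    ∀ᵐ ω ∂μ,
      {x₁ : ℝ | ∃ x₂ x₃ x₄, x₁ ∈ pp ω ∧ x₂ ∈ pp ω ∧ x₃ ∈ pp ω ∧ x₄ ∈ pp ω ∧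
          x₁ < x₂ ∧ x₂ < x₃ ∧ x₃ < x₄ ∧
          pp ω ∩ Set.Ioo x₁ x₂ = ∅ ∧ pp ω ∩ Set.Ioo x₂ x₃ = ∅ ∧
          pp ω ∩ Set.Ioo x₃ x₄ = ∅ ∧
          x₃ - x₂ > (x₂ - x₁) + (x₄ - x₃)}.Infinite ∧
      ∀ z ∈ coveredRegion (pp ω) (rad ω),
        Bornology.IsBounded (connectedComponentIn (coveredRegion (pp ω) (rad ω)) z) := by
  have hcnt : PoisCnt μ lam pp := hPP.1
  -- the two block families
  set gR : ℕ → ℝ := fun k => 9 * (k : ℝ) with hgR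
  set gL : ℕ → ℝ := fun k => -9 * (k : ℝ) - 9 with hgL
  have hgdR : ∀ j k : ℕ, j ≠ k → Disjoint (blockI (gR j)) (blockI (gR k)) := by
    intro j k hjk
    rcases lt_or_gt_of_ne hjk with h | h
    · have : (j : ℝ) + 1 ≤ k := by exact_mod_cast h
      exact Ioc_disj (by simp only [hgR]; linarith)
    · have : (k : ℝ) + 1 ≤ j := by exact_mod_cast h
      exact (Ioc_disj (by simp only [hgR]; linarith)).symm
  have hgdL : ∀ j k : ℕ, j ≠ k → Disjoint (blockI (gL j)) (blockI (gL k)) := by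
    intro j k hjk
    rcases lt_or_gt_of_ne hjk with h | h
    · have : (j : ℝ) + 1 ≤ k := by exact_mod_cast h
      exact (Ioc_disj (by simp only [hgL]; linarith)).symm
    · have : (k : ℝ) + 1 ≤ j := by exact_mod_cast h
      exact Ioc_disj (by simp only [hgL]; linarith)
  have haeR := ae_freq μ lam pp hcnt hlam gR hgdR
  have haeL := ae_freq μ lam pp hcnt hlam gL hgdL
  have haefin : ∀ᵐ ω ∂μ, ∀ n : ℕ, (pp ω ∩ Set.Ioc (-(n:ℝ)) n).Finite :=
    ae_all_iff.2 fun n => (hcnt _ measurableSet_Ioc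
      (by rw [Real.volume_Ioc]; exact ENNReal.ofReal_lt_top)).1
  filter_upwards [haeR, haeL, haefin, hhard] with ω hR hL hfin hhd
  -- finiteness on all blocks
  have hfin' : ∀ a : ℝ, (pp ω ∩ Set.Ioc a (a + 9)).Finite := by
    intro a
    obtain ⟨n, hn⟩ := exists_nat_ge (|a| + 9)
    refine (hfin n).subset ?_
    rintro x ⟨h1, h2, h3⟩
    have h4 := neg_abs_le a
    have h5 := le_abs_self a
    exact ⟨h1, by linarith, by linarith⟩
  -- quadruple extraction from an occurring block event
  have hquad : ∀ a : ℝ, ω ∈ FEv pp a →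
      ∃ x₁ x₂ x₃ x₄, x₁ ∈ pp ω ∧ x₂ ∈ pp ω ∧ x₃ ∈ pp ω ∧ x₄ ∈ pp ω ∧
        x₁ < x₂ ∧ x₂ < x₃ ∧ x₃ < x₄ ∧
        pp ω ∩ Set.Ioo x₁ x₂ = ∅ ∧ pp ω ∩ Set.Ioo x₂ x₃ = ∅ ∧ pp ω ∩ Set.Ioo x₃ x₄ = ∅ ∧
        x₃ - x₂ > (x₂ - x₁) + (x₄ - x₃) ∧ a < x₁ ∧ x₂ ≤ a + 2 ∧ a + 7 < x₃ ∧ x₄ ≤ a + 9 := by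
    intro a ha
    obtain ⟨ha1, ha2⟩ := ha
    exact quad_of_block (pp ω) a (hfin' a) ha1 ha2
  constructor
  · -- infinitude
    apply Set.infinite_of_not_bddAbove
    rintro ⟨b, hb⟩
    obtain ⟨K, hK⟩ := exists_nat_gt (b / 9)
    obtain ⟨k, hkK, hFk⟩ := hR K
    obtain ⟨x₁, x₂, x₃, x₄, h1, h2, h3, h4, h5, h6, h7, h8, h9, h10, h11, h12, _, _, _⟩ :=
      hquad (gR k) hFk
    have hx₁Q : x₁ ∈ {x₁ : ℝ | ∃ x₂ x₃ x₄, x₁ ∈ pp ω ∧ x₂ ∈ pp ω ∧ x₃ ∈ pp ω ∧ x₄ ∈ pp ω ∧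
        x₁ < x₂ ∧ x₂ < x₃ ∧ x₃ < x₄ ∧
        pp ω ∩ Set.Ioo x₁ x₂ = ∅ ∧ pp ω ∩ Set.Ioo x₂ x₃ = ∅ ∧
        pp ω ∩ Set.Ioo x₃ x₄ = ∅ ∧
        x₃ - x₂ > (x₂ - x₁) + (x₄ - x₃)} :=
      ⟨x₂, x₃, x₄, h1, h2, h3, h4, h5, h6, h7, h8, h9, h10, h11⟩
    have hle := hb hx₁Q
    have hKk : (K : ℝ) ≤ k := Nat.cast_le.2 hkK
    have : b < 9 * (K : ℝ) := by linarith [(div_lt_iff₀ (by norm_num : (0:ℝ) < 9)).1 hK]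
    simp only [hgR] at h12
    linarith
  · -- bounded components
    apply bounded_components (pp ω) (rad ω)
    · -- cut points to the right
      intro R
      obtain ⟨K, hK⟩ := exists_nat_gt (R / 9)
      obtain ⟨k, hkK, hFk⟩ := hR K
      obtain ⟨x₁, x₂, x₃, x₄, h1, h2, h3, h4, h5, h6, h7, h8, h9, h10, h11, h12, _, _, _⟩ :=
        hquad (gR k) hFk
      obtain ⟨y, hy1, hy2, hy3⟩ := cutpoint (pp ω) (rad ω) hhd.1 hhd.2 h1 h2 h3 h4 h5 h6 h7 h9 h11
      refine ⟨y, ?_, hy3⟩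
      have hKk : (K : ℝ) ≤ k := Nat.cast_le.2 hkK
      have : R < 9 * (K : ℝ) := by linarith [(div_lt_iff₀ (by norm_num : (0:ℝ) < 9)).1 hK]
      simp only [hgR] at h12
      linarith
    · -- cut points to the left
      intro R
      obtain ⟨K, hK⟩ := exists_nat_gt (-R / 9)
      obtain ⟨k, hkK, hFk⟩ := hL K
      obtain ⟨x₁, x₂, x₃, x₄, h1, h2, h3, h4, h5, h6, h7, h8, h9, h10, h11, _, _, _, h15⟩ :=
        hquad (gL k) hFk
      obtain ⟨y, hy1, hy2, hy3⟩ := cutpoint (pp ω) (rad ω) hhd.1 hhd.2 h1 h2 h3 h4 h5 h6 h7 h9 h11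
      refine ⟨y, ?_, hy3⟩
      have hKk : (K : ℝ) ≤ k := Nat.cast_le.2 hkK
      have : -R < 9 * (K : ℝ) := by linarith [(div_lt_iff₀ (by norm_num : (0:ℝ) < 9)).1 hK]
      simp only [hgL] at h15
      have hy4 : y ≤ x₄ := by linarith
      linarith
end
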